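/- For agents with start/goal nodes satisfying (S1.x−G1.x)(S2.x−G2.x) ≥ 0, (S1.y−G1.y)(S2.y−G2.y) ≥ 0, Manhattan-optimality (|Si.x−Gi.x|+|Si.y−Gi.y| = Gi.t−Si.t > 0), equal start times S1.t = S2.t, and the existence of a cell c in both the S1-G1 and S2-G2 rectangles with equal Manhattan distances d(S1,c)=d(S2,c): for every cell c' in the intersection of the two rectangles, d(S1,c') = d(S2,c'). -/

import Mathlib

/-- Manhattan distance between two cells. -/
def ManhattanDist (a b : ℤ × ℤ) : ℤ := |a.1 - b.1| + |a.2 - b.2|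

/-- Membership in the axis-aligned rectangle with diagonal corners `S` and `G`. -/
def InRect (S G c : ℤ × ℤ) : Prop :=
  min S.1 G.1 ≤ c.1 ∧ c.1 ≤ max S.1 G.1 ∧ min S.2 G.2 ≤ c.2 ∧ c.2 ≤ max S.2 G.2

/-!
On each axis the two agents move in the same direction, so every coordinate common to both
intervals lies on the same side of both start coordinates, and the difference of the two
distances along that axis is the constant `±(S2 - S1)`. Hence `d(S1, ·) - d(S2, ·)` is constant
on the intersection of the rectangles, and it vanishes at `c`.
-/

open Set

section AbsSub

variable {α : Type*} [AddCommGroup α] [LinearOrder α] [IsOrderedAddMonoid α] {a a' x : α}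

lemma abs_sub_sub_abs_sub_of_le (ha : a ≤ x) (ha' : a' ≤ x) : |a - x| - |a' - x| = a' - a := by
  rw [abs_of_nonpos (sub_nonpos.2 ha), abs_of_nonpos (sub_nonpos.2 ha')]
  abel

lemma abs_sub_sub_abs_sub_of_ge (ha : x ≤ a) (ha' : x ≤ a') : |a - x| - |a' - x| = a - a' := by
  rw [abs_of_nonneg (sub_nonneg.2 ha), abs_of_nonneg (sub_nonneg.2 ha')]
  abel

end AbsSub

lemma abs_sub_sub_abs_sub_eq_of_mem_uIcc {α : Type*} [Ring α] [LinearOrder α]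
    [IsStrictOrderedRing α] {a b a' b' x y : α} (hdir : 0 ≤ (a - b) * (a' - b'))
    (hx : x ∈ uIcc a b) (hx' : x ∈ uIcc a' b') (hy : y ∈ uIcc a b) (hy' : y ∈ uIcc a' b') :
    |a - x| - |a' - x| = |a - y| - |a' - y| := by
  rcases mul_nonneg_iff.1 hdir with ⟨h, h'⟩ | ⟨h, h'⟩
  · rw [uIcc_of_ge (sub_nonneg.1 h)] at hx hy
    rw [uIcc_of_ge (sub_nonneg.1 h')] at hx' hy'
    rw [abs_sub_sub_abs_sub_of_ge hx.2 hx'.2, abs_sub_sub_abs_sub_of_ge hy.2 hy'.2]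
  · rw [uIcc_of_le (sub_nonpos.1 h)] at hx hy
    rw [uIcc_of_le (sub_nonpos.1 h')] at hx' hy'
    rw [abs_sub_sub_abs_sub_of_le hx.1 hx'.1, abs_sub_sub_abs_sub_of_le hy.1 hy'.1]

lemma inRect_iff {S G c : ℤ × ℤ} : InRect S G c ↔ c.1 ∈ uIcc S.1 G.1 ∧ c.2 ∈ uIcc S.2 G.2 :=
  and_assoc.symm

lemma manhattanDist_sub_eq_of_inRect {S1 G1 S2 G2 c c' : ℤ × ℤ}
    (hdirx : 0 ≤ (S1.1 - G1.1) * (S2.1 - G2.1)) (hdiry : 0 ≤ (S1.2 - G1.2) * (S2.2 - G2.2))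
    (hc1 : InRect S1 G1 c) (hc2 : InRect S2 G2 c)
    (hc1' : InRect S1 G1 c') (hc2' : InRect S2 G2 c') :
    ManhattanDist S1 c - ManhattanDist S2 c = ManhattanDist S1 c' - ManhattanDist S2 c' := by
  rw [inRect_iff] at hc1 hc2 hc1' hc2'
  have hx := abs_sub_sub_abs_sub_eq_of_mem_uIcc hdirx hc1.1 hc2.1 hc1'.1 hc2'.1
  have hy := abs_sub_sub_abs_sub_eq_of_mem_uIcc hdiry hc1.2 hc2.2 hc1'.2 hc2'.2
  unfold ManhattanDist
  linear_combination hx + hy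

theorem equal_distance_on_whole_rectangle_general
    (S1 G1 S2 G2 : ℤ × ℤ)
    (hdirx : (S1.1 - G1.1) * (S2.1 - G2.1) ≥ 0)
    (hdiry : (S1.2 - G1.2) * (S2.2 - G2.2) ≥ 0)
    (c : ℤ × ℤ) (hc1 : InRect S1 G1 c) (hc2 : InRect S2 G2 c)
    (hceq : ManhattanDist S1 c = ManhattanDist S2 c) :
    ∀ c' : ℤ × ℤ, InRect S1 G1 c' → InRect S2 G2 c' →
      ManhattanDist S1 c' = ManhattanDist S2 c' := by
  intro c' hc1' hc2'
  have hdiff := manhattanDist_sub_eq_of_inRect hdirx hdiry hc1 hc2 hc1' hc2'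
  linarith

/-- Under same-direction movement, Manhattan-optimality with positive duration, equal
start times, and the existence of one cell `c` in both rectangles with equal Manhattan
distances from the two starts, every cell `c'` in the intersection of the two rectangles
has equal Manhattan distances from the two starts. -/
theorem equal_distance_on_whole_rectangle
    (S1 G1 S2 G2 : ℤ × ℤ) (tS1 tG1 tS2 tG2 : ℤ)
    (hdirx : (S1.1 - G1.1) * (S2.1 - G2.1) ≥ 0)
    (hdiry : (S1.2 - G1.2) * (S2.2 - G2.2) ≥ 0)
    (hopt1 : ManhattanDist S1 G1 = tG1 - tS1) (hpos1 : tG1 - tS1 > 0)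
    (hopt2 : ManhattanDist S2 G2 = tG2 - tS2) (hpos2 : tG2 - tS2 > 0)
    (hstart : tS1 = tS2)
    (c : ℤ × ℤ) (hc1 : InRect S1 G1 c) (hc2 : InRect S2 G2 c)
    (hceq : ManhattanDist S1 c = ManhattanDist S2 c) :
    ∀ c' : ℤ × ℤ, InRect S1 G1 c' → InRect S2 G2 c' →
      ManhattanDist S1 c' = ManhattanDist S2 c' :=
  equal_distance_on_whole_rectangle_general S1 G1 S2 G2 hdirx hdiry c hc1 hc2 hceq
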